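/- arXiv:1912.01733 — 3 statements merged into one kernel-verified Lean document; each statement's English description precedes it below -/
import Mathlib

section
/- Assume the following result (Theorem 1 of Pomatto–Strack–Tamuz): for all Borel probability measures μ', ν' on ℝ with finite first moments and E[μ'] < E[ν'], there exists a Borel probability measure η' on ℝ such that μ' * η' ≤ ν' * η' in first-order stochastic dominance. Then the only map φ : P(ℝ) → ℝ that is both monotone with respect to first-order stochastic dominance and a homomorphism from (P(ℝ), *) to (ℝ, +) is the zero map φ = 0. -/
open MeasureTheory

/-- First-order stochastic dominance: `StochDom μ ν` means `μ ≤ ν`,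
i.e. `μ((-∞,x]) ≥ ν((-∞,x])` for all `x`. -/
def StochDom (μ ν : MeasureTheory.Measure ℝ) : Prop :=
  ∀ x : ℝ, ν (Set.Iic x) ≤ μ (Set.Iic x)

/-- Convolution of probability measures. -/
noncomputable def pconv (μ ν : ProbabilityMeasure ℝ) : ProbabilityMeasure ℝ :=
  ⟨(μ : MeasureTheory.Measure ℝ).conv (ν : MeasureTheory.Measure ℝ), by infer_instance⟩

/-- The point mass at `x` as a probability measure. -/
noncomputable def pdirac (x : ℝ) : ProbabilityMeasure ℝ :=
  ⟨MeasureTheory.Measure.dirac x, inferInstance⟩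

/-- First-order stochastic dominance on probability measures. -/
def PSD (μ ν : ProbabilityMeasure ℝ) : Prop :=
  StochDom (μ : MeasureTheory.Measure ℝ) (ν : MeasureTheory.Measure ℝ)

/-! On point masses `φ (δ n) = n * φ (δ 1)`. The two-point measures with mass `1/(n+1)` at `(n+1)²`
have mean `n + 1 > n`, yet their tails above `0` vanish uniformly, so they all lie below a single
measure `τ`; the assumed theorem then gives `n * φ (δ 1) ≤ φ τ` for every `n`, whence `φ (δ 1) = 0`
and `φ` kills every point mass. For general `μ`, suitable translates of the convolution powers
`μ^{*n}` have uniformly small tails, so they all lie below one probability measure and above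
another; since `φ (μ^{*n} * δ a) = n * φ μ`, this squeezes `φ μ` to `0`. -/

open Set Filter Topology ProbabilityTheory Function
open scoped ENNReal

lemma nonpos_of_forall_nat_mul_le {c C : ℝ} (h : ∀ n : ℕ, n * c ≤ C) : c ≤ 0 := by
  by_contra! hc
  obtain ⟨n, hn⟩ := exists_nat_gt (C / c)
  linarith [h n, (div_lt_iff₀ hc).1 hn]

lemma psd_iff_cdf_le (μ ν : ProbabilityMeasure ℝ) :
    PSD μ ν ↔ ∀ x, cdf (ν : Measure ℝ) x ≤ cdf (μ : Measure ℝ) x := by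
  refine forall_congr' fun x => ?_
  rw [← ofReal_cdf, ← ofReal_cdf, ENNReal.ofReal_le_ofReal_iff (cdf_nonneg _ x)]

lemma psd_pdirac_of_le {a b : ℝ} (hab : a ≤ b) : PSD (pdirac a) (pdirac b) := by
  intro x
  by_cases hb : b ≤ x
  · simp [pdirac, hb, hab.trans hb]
  · simp [pdirac, hb]

lemma pconv_pdirac_pdirac (a b : ℝ) : pconv (pdirac a) (pdirac b) = pdirac (a + b) :=
  Subtype.ext (Measure.dirac_conv_dirac a b)

lemma cdf_pconv_pdirac (μ : ProbabilityMeasure ℝ) (a x : ℝ) :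
    cdf (pconv μ (pdirac a) : Measure ℝ) x = cdf (μ : Measure ℝ) (x - a) := by
  have hpre : (· + a) ⁻¹' Iic x = Iic (x - a) := by
    ext y
    simp [le_sub_iff_add_le]
  rw [cdf_eq_real, cdf_eq_real]
  simp only [pconv, pdirac, ProbabilityMeasure.coe_mk, Measure.conv_dirac,
    map_measureReal_apply (measurable_add_const a) measurableSet_Iic, hpre]

noncomputable def pconvPow (μ : ProbabilityMeasure ℝ) : ℕ → ProbabilityMeasure ℝ
  | 0 => pdirac 0
  | n + 1 => pconv (pconvPow μ n) μ

lemma pconvPow_pdirac (a : ℝ) (n : ℕ) : pconvPow (pdirac a) n = pdirac (n * a) := by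
  induction n with
  | zero => simp [pconvPow]
  | succ n ih => rw [pconvPow, ih, pconv_pdirac_pdirac]; push_cast; ring_nf

lemma exists_cdf_eq_rightLim {F : ℝ → ℝ} (hF : Monotone F) (h0 : Tendsto F atBot (𝓝 0))
    (h1 : Tendsto F atTop (𝓝 1)) :
    ∃ τ : ProbabilityMeasure ℝ, ∀ x, cdf (τ : Measure ℝ) x = rightLim F x := by
  set G := hF.stieltjesFunction
  have hG : ∀ x, F x ≤ G x ∧ G x ≤ F (x + 1) := fun x =>
    ⟨hF.le_rightLim le_rfl, hF.rightLim_le (lt_add_one x)⟩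
  have hG0 : Tendsto G atBot (𝓝 0) :=
    tendsto_of_tendsto_of_tendsto_of_le_of_le h0
      (h0.comp (tendsto_atBot_add_const_right _ 1 tendsto_id)) (fun x => (hG x).1) fun x => (hG x).2
  have hG1 : Tendsto G atTop (𝓝 1) :=
    tendsto_of_tendsto_of_tendsto_of_le_of_le h1
      (h1.comp (tendsto_atTop_add_const_right _ 1 tendsto_id)) (fun x => (hG x).1) fun x => (hG x).2
  refine ⟨⟨G.measure, G.isProbabilityMeasure hG0 hG1⟩, fun x => ?_⟩
  rw [ProbabilityMeasure.coe_mk, cdf_measure_stieltjesFunction G hG0 hG1]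
  rfl

lemma exists_psd_upper_bound (κ : ℕ → ProbabilityMeasure ℝ) {u : ℕ → ℝ}
    (hu : Tendsto u atTop (𝓝 0)) (h : ∀ n, 1 - u n ≤ cdf (κ n : Measure ℝ) 0) :
    ∃ τ : ProbabilityMeasure ℝ, ∀ n, PSD (κ n) τ := by
  set F : ℝ → ℝ := fun x => ⨅ n, cdf (κ n : Measure ℝ) x
  have hbdd : ∀ x, BddBelow (range fun n => cdf (κ n : Measure ℝ) x) :=
    fun x => ⟨0, forall_mem_range.2 fun n => cdf_nonneg _ x⟩
  have hF : ∀ n x, F x ≤ cdf (κ n : Measure ℝ) x := fun n x => ciInf_le (hbdd x) n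
  have hFmono : Monotone F := fun x y hxy =>
    le_ciInf fun n => (hF n x).trans (monotone_cdf _ hxy)
  have hF0 : Tendsto F atBot (𝓝 0) :=
    tendsto_of_tendsto_of_tendsto_of_le_of_le tendsto_const_nhds
      (tendsto_cdf_atBot (κ 0 : Measure ℝ)) (fun x => le_ciInf fun n => cdf_nonneg _ x) (hF 0)
  have htight : ∀ ε > 0, ∀ᶠ x in atTop, 1 - ε ≤ F x := by
    intro ε hε
    -- only the finitely many `κ n` with `ε ≤ u n` need a threshold of their own
    obtain ⟨N, hN⟩ := eventually_atTop.1 (hu.eventually (gt_mem_nhds hε))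
    filter_upwards [(finite_lt_nat N).eventually_all.2 fun n _ =>
      (tendsto_cdf_atTop (κ n : Measure ℝ)).eventually_const_le (by linarith : 1 - ε < 1),
      eventually_ge_atTop 0] with x hsmall hx
    refine le_ciInf fun n => ?_
    rcases lt_or_ge n N with hn | hn
    · exact hsmall n hn
    · linarith [h n, monotone_cdf (κ n : Measure ℝ) hx, hN n hn]
  have hF1 : Tendsto F atTop (𝓝 1) := by
    refine tendsto_order.2 ⟨fun a ha => ?_, fun b hb => ?_⟩
    · filter_upwards [htight ((1 - a) / 2) (by linarith)] with x hx
      linarith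
    · exact Eventually.of_forall fun x => ((hF 0 x).trans (cdf_le_one _ x)).trans_lt hb
  obtain ⟨τ, hτ⟩ := exists_cdf_eq_rightLim hFmono hF0 hF1
  refine ⟨τ, fun n => (psd_iff_cdf_le _ _).2 fun x => ?_⟩
  rw [hτ]
  exact ge_of_tendsto (((cdf (κ n : Measure ℝ)).right_continuous x).mono Ioi_subset_Ici_self)
    (eventually_nhdsWithin_of_forall fun y hy => (hFmono.rightLim_le hy).trans (hF n y))

lemma exists_psd_lower_bound (κ : ℕ → ProbabilityMeasure ℝ) {u : ℕ → ℝ}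
    (hu : Tendsto u atTop (𝓝 0)) (h : ∀ n, cdf (κ n : Measure ℝ) 0 ≤ u n) :
    ∃ τ : ProbabilityMeasure ℝ, ∀ n, PSD τ (κ n) := by
  set F : ℝ → ℝ := fun x => ⨆ n, cdf (κ n : Measure ℝ) x
  have hbdd : ∀ x, BddAbove (range fun n => cdf (κ n : Measure ℝ) x) :=
    fun x => ⟨1, forall_mem_range.2 fun n => cdf_le_one _ x⟩
  have hF : ∀ n x, cdf (κ n : Measure ℝ) x ≤ F x := fun n x => le_ciSup (hbdd x) n
  have hFmono : Monotone F := fun x y hxy =>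
    ciSup_le fun n => (monotone_cdf _ hxy).trans (hF n y)
  have hF1 : Tendsto F atTop (𝓝 1) :=
    tendsto_of_tendsto_of_tendsto_of_le_of_le (tendsto_cdf_atTop (κ 0 : Measure ℝ))
      tendsto_const_nhds (hF 0) (fun x => ciSup_le fun n => cdf_le_one _ x)
  have htight : ∀ ε > 0, ∀ᶠ x in atBot, F x ≤ ε := by
    intro ε hε
    obtain ⟨N, hN⟩ := eventually_atTop.1 (hu.eventually (gt_mem_nhds hε))
    filter_upwards [(finite_lt_nat N).eventually_all.2 fun n _ =>
      (tendsto_cdf_atBot (κ n : Measure ℝ)).eventually_le_const hε,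
      eventually_le_atBot 0] with x hsmall hx
    refine ciSup_le fun n => ?_
    rcases lt_or_ge n N with hn | hn
    · exact hsmall n hn
    · linarith [h n, monotone_cdf (κ n : Measure ℝ) hx, hN n hn]
  have hF0 : Tendsto F atBot (𝓝 0) := by
    refine tendsto_order.2 ⟨fun a ha => ?_, fun b hb => ?_⟩
    · exact Eventually.of_forall fun x => ha.trans_le ((cdf_nonneg _ x).trans (hF 0 x))
    · filter_upwards [htight (b / 2) (by linarith)] with x hx
      linarith
  obtain ⟨τ, hτ⟩ := exists_cdf_eq_rightLim hFmono hF0 hF1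
  refine ⟨τ, fun n => (psd_iff_cdf_le _ _).2 fun x => ?_⟩
  rw [hτ]
  exact (hF n x).trans (hFmono.le_rightLim le_rfl)

lemma exists_psd_upper_bound_shift (κ : ℕ → ProbabilityMeasure ℝ) :
    ∃ τ : ProbabilityMeasure ℝ, ∀ n, ∃ a : ℝ, PSD (pconv (κ n) (pdirac a)) τ := by
  have hx : ∀ n : ℕ, ∃ x, 1 - 1 / (n + 1 : ℝ) ≤ cdf (κ n : Measure ℝ) x := fun n =>
    ((tendsto_cdf_atTop _).eventually_const_le (sub_lt_self 1 (by positivity))).exists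
  choose x hx using hx
  obtain ⟨τ, hτ⟩ := exists_psd_upper_bound (fun n => pconv (κ n) (pdirac (-x n)))
    tendsto_one_div_add_atTop_nhds_zero_nat fun n => by simpa [cdf_pconv_pdirac] using hx n
  exact ⟨τ, fun n => ⟨-x n, hτ n⟩⟩

lemma exists_psd_lower_bound_shift (κ : ℕ → ProbabilityMeasure ℝ) :
    ∃ τ : ProbabilityMeasure ℝ, ∀ n, ∃ a : ℝ, PSD τ (pconv (κ n) (pdirac a)) := by
  have hx : ∀ n : ℕ, ∃ x, cdf (κ n : Measure ℝ) x ≤ 1 / (n + 1 : ℝ) := fun n =>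
    ((tendsto_cdf_atBot _).eventually_le_const (by positivity)).exists
  choose x hx using hx
  obtain ⟨τ, hτ⟩ := exists_psd_lower_bound (fun n => pconv (κ n) (pdirac (-x n)))
    tendsto_one_div_add_atTop_nhds_zero_nat fun n => by simpa [cdf_pconv_pdirac] using hx n
  exact ⟨τ, fun n => ⟨-x n, hτ n⟩⟩

noncomputable def twoPoint (p : ℝ≥0∞) (hp : p ≤ 1) (b : ℝ) : ProbabilityMeasure ℝ :=
  ⟨(1 - p) • Measure.dirac 0 + p • Measure.dirac b, ⟨by simp [tsub_add_cancel_of_le hp]⟩⟩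

section TwoPoint

variable {p : ℝ≥0∞} (hp : p ≤ 1)

lemma integrable_twoPoint (b : ℝ) : Integrable (fun x : ℝ => x) (twoPoint p hp b : Measure ℝ) := by
  have hne : ∀ q : ℝ≥0∞, q ≤ 1 → q ≠ ∞ := fun q hq => (hq.trans_lt ENNReal.one_lt_top).ne
  exact .add_measure ((integrable_dirac (by simp)).smul_measure (hne _ tsub_le_self))
    ((integrable_dirac (by simp)).smul_measure (hne _ hp))

lemma integral_twoPoint (b : ℝ) : ∫ x, x ∂(twoPoint p hp b : Measure ℝ) = p.toReal * b := by
  have h := integrable_twoPoint hp b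
  rw [twoPoint, ProbabilityMeasure.coe_mk] at h ⊢
  rw [integral_add_measure h.left_of_add_measure h.right_of_add_measure, integral_smul_measure,
    integral_smul_measure, integral_dirac, integral_dirac, smul_zero, zero_add, smul_eq_mul]

lemma cdf_twoPoint_zero {b : ℝ} (hb : 0 < b) :
    cdf (twoPoint p hp b : Measure ℝ) 0 = 1 - p.toReal := by
  rw [cdf_eq_real, measureReal_def]
  simp [twoPoint, hb.not_ge, ENNReal.toReal_sub_of_le hp ENNReal.one_ne_top]

end TwoPoint

lemma exists_psd_upper_bound_integral_gt :
    ∃ τ : ProbabilityMeasure ℝ, ∀ n : ℕ, ∃ ρ : ProbabilityMeasure ℝ,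
      Integrable (fun x : ℝ => x) (ρ : Measure ℝ) ∧ n < ∫ x, x ∂(ρ : Measure ℝ) ∧ PSD ρ τ := by
  have hp : ∀ n : ℕ, ((n + 1 : ℕ) : ℝ≥0∞)⁻¹ ≤ 1 := fun n => ENNReal.inv_le_one.2 (by simp)
  have hp_toReal : ∀ n : ℕ, (((n + 1 : ℕ) : ℝ≥0∞)⁻¹).toReal = 1 / (n + 1) := fun n => by
    rw [ENNReal.toReal_inv, ENNReal.toReal_natCast, Nat.cast_succ, one_div]
  set ρ := fun n : ℕ => twoPoint _ (hp n) ((n + 1 : ℝ) ^ 2)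
  obtain ⟨τ, hτ⟩ := exists_psd_upper_bound ρ tendsto_one_div_add_atTop_nhds_zero_nat fun n => by
    rw [cdf_twoPoint_zero _ (by positivity), hp_toReal]
  refine ⟨τ, fun n => ⟨ρ n, integrable_twoPoint _ _, ?_, hτ n⟩⟩
  rw [integral_twoPoint, hp_toReal]
  field_simp
  linarith

structure IsMonotoneHom (φ : ProbabilityMeasure ℝ → ℝ) : Prop where
  mono : ∀ μ ν, PSD μ ν → φ μ ≤ φ ν
  map_pconv : ∀ μ ν, φ (pconv μ ν) = φ μ + φ ν

namespace IsMonotoneHom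

variable {φ : ProbabilityMeasure ℝ → ℝ}

lemma map_pdirac_zero (hφ : IsMonotoneHom φ) : φ (pdirac 0) = 0 := by
  have h := hφ.map_pconv (pdirac 0) (pdirac 0)
  rw [pconv_pdirac_pdirac, add_zero] at h
  linarith

lemma map_pconvPow (hφ : IsMonotoneHom φ) (μ : ProbabilityMeasure ℝ) (n : ℕ) :
    φ (pconvPow μ n) = n * φ μ := by
  induction n with
  | zero => simp [pconvPow, hφ.map_pdirac_zero]
  | succ n ih => rw [pconvPow, hφ.map_pconv, ih]; push_cast; ring

lemma le_of_psd_pconv (hφ : IsMonotoneHom φ) {μ ν η : ProbabilityMeasure ℝ}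
    (h : PSD (pconv μ η) (pconv ν η)) : φ μ ≤ φ ν := by
  have := hφ.mono _ _ h
  rwa [hφ.map_pconv, hφ.map_pconv, add_le_add_iff_right] at this

lemma map_pdirac_natCast (hφ : IsMonotoneHom φ) (n : ℕ) :
    φ (pdirac n) = n * φ (pdirac 1) := by
  rw [← hφ.map_pconvPow, pconvPow_pdirac, mul_one]

lemma map_pdirac_one_eq_zero (hφ : IsMonotoneHom φ)
    (hmean : ∀ μ ν : ProbabilityMeasure ℝ, Integrable (fun x : ℝ => x) (μ : Measure ℝ) →
      Integrable (fun x : ℝ => x) (ν : Measure ℝ) →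
      ∫ x, x ∂(μ : Measure ℝ) < ∫ x, x ∂(ν : Measure ℝ) → φ μ ≤ φ ν) :
    φ (pdirac 1) = 0 := by
  obtain ⟨τ, hτ⟩ := exists_psd_upper_bound_integral_gt
  refine le_antisymm (nonpos_of_forall_nat_mul_le (C := φ τ) fun n => ?_) ?_
  · obtain ⟨ρ, hρ, hlt, hρτ⟩ := hτ n
    rw [← hφ.map_pdirac_natCast]
    refine (hmean _ _ (integrable_dirac (by simp)) hρ ?_).trans (hφ.mono _ _ hρτ)
    simpa [pdirac] using hlt
  · exact hφ.map_pdirac_zero ▸ hφ.mono _ _ (psd_pdirac_of_le zero_le_one)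

lemma map_pdirac_eq_zero (hφ : IsMonotoneHom φ) (h1 : φ (pdirac 1) = 0) (a : ℝ) :
    φ (pdirac a) = 0 := by
  have hnonneg : ∀ {a}, 0 ≤ a → φ (pdirac a) = 0 := fun {a} ha => by
    obtain ⟨n, hn⟩ := exists_nat_ge a
    refine le_antisymm ?_ ?_
    · simpa [hφ.map_pdirac_natCast, h1] using hφ.mono _ _ (psd_pdirac_of_le hn)
    · simpa [hφ.map_pdirac_zero] using hφ.mono _ _ (psd_pdirac_of_le ha)
  rcases le_total 0 a with ha | ha
  · exact hnonneg ha
  · have h := hφ.map_pconv (pdirac a) (pdirac (-a))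
    rwa [pconv_pdirac_pdirac, add_neg_cancel, hφ.map_pdirac_zero, hnonneg (neg_nonneg.2 ha),
      add_zero, eq_comm] at h

lemma apply_nonpos (hφ : IsMonotoneHom φ) (hδ : ∀ a, φ (pdirac a) = 0)
    (μ : ProbabilityMeasure ℝ) : φ μ ≤ 0 := by
  obtain ⟨τ, hτ⟩ := exists_psd_upper_bound_shift (pconvPow μ)
  refine nonpos_of_forall_nat_mul_le (C := φ τ) fun n => ?_
  obtain ⟨a, ha⟩ := hτ n
  simpa [hφ.map_pconv, hφ.map_pconvPow, hδ] using hφ.mono _ _ ha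

lemma apply_nonneg (hφ : IsMonotoneHom φ) (hδ : ∀ a, φ (pdirac a) = 0)
    (μ : ProbabilityMeasure ℝ) : 0 ≤ φ μ := by
  obtain ⟨τ, hτ⟩ := exists_psd_lower_bound_shift (pconvPow μ)
  refine neg_nonpos.1 (nonpos_of_forall_nat_mul_le (C := -φ τ) fun n => ?_)
  obtain ⟨a, ha⟩ := hτ n
  simpa [hφ.map_pconv, hφ.map_pconvPow, hδ] using hφ.mono _ _ ha

end IsMonotoneHom

theorem no_monotone_homomorphism
    (PST : ∀ μ' ν' : ProbabilityMeasure ℝ,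
      Integrable (fun x : ℝ => x) (μ' : Measure ℝ) →
      Integrable (fun x : ℝ => x) (ν' : Measure ℝ) →
      (∫ x, x ∂(μ' : Measure ℝ)) < (∫ x, x ∂(ν' : Measure ℝ)) →
      ∃ η' : ProbabilityMeasure ℝ, PSD (pconv μ' η') (pconv ν' η'))
    (φ : ProbabilityMeasure ℝ → ℝ)
    (mono : ∀ μ ν : ProbabilityMeasure ℝ, PSD μ ν → φ μ ≤ φ ν)
    (hom : ∀ μ ν : ProbabilityMeasure ℝ, φ (pconv μ ν) = φ μ + φ ν) :
    ∀ μ : ProbabilityMeasure ℝ, φ μ = 0 := by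
  have hφ : IsMonotoneHom φ := ⟨mono, hom⟩
  have hδ : ∀ a, φ (pdirac a) = 0 := hφ.map_pdirac_eq_zero <|
    hφ.map_pdirac_one_eq_zero fun μ ν hμ hν hlt =>
      let ⟨_, hη⟩ := PST μ ν hμ hν hlt
      hφ.le_of_psd_pconv hη
  exact fun μ => le_antisymm (hφ.apply_nonpos hδ μ) (hφ.apply_nonneg hδ μ)
end

section
/- Let μ, ν ∈ P(ℝ) be such that μ has expectation +∞ (i.e., ∫_{-∞}^0 |x| dμ < ∞ and ∫_0^∞ x dμ = ∞) and ν has expectation -∞ (i.e., ∫_0^∞ x dν < ∞ and ∫_{-∞}^0 |x| dν = ∞). Then there is no η ∈ P(ℝ) with μ * η ≤ ν * η in first-order stochastic dominance. -/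
/-!
Let `X ∼ μ`, `Y ∼ ν` have distribution functions `F`, `G`. Since `∫_{-∞}^0 F = E[X⁻] < ∞` and
`∫_0^∞ (1 - G) = E[Y⁺] < ∞`, the excess `(F - G)⁺` has finite integral, while
`(G - F)⁺ ≥ (1 - F) - (1 - G)` on `(0, ∞)` has infinite integral because `∫_0^∞ (1 - F) = ∞`.
Convolving with `η` averages translates of the distribution function,
`F_{μ*η}(x) = ∫ F(x - y) dη(y)`, so `μ * η ≤ ν * η` gives
`∫ (G - F)⁺(x - y) dη(y) ≤ ∫ (F - G)⁺(x - y) dη(y)` for every `x`. Integrating in `x` (Tonelli and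
translation invariance of Lebesgue measure) yields `∫ (G - F)⁺ ≤ ∫ (F - G)⁺`, a contradiction.
-/

open MeasureTheory

open Set
open scoped ENNReal

lemma setLIntegral_Ici_ofReal_eq (ρ : Measure ℝ) :
    ∫⁻ x in Ici 0, ENNReal.ofReal x ∂ρ = ∫⁻ t in Ioi 0, ρ (Ioi t) := by
  have hnn : 0 ≤ᵐ[ρ.restrict (Ici 0)] fun x : ℝ => x :=
    ae_restrict_of_forall_mem measurableSet_Ici fun _ hx => hx
  rw [lintegral_eq_lintegral_meas_lt _ hnn measurable_id.aemeasurable]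
  refine setLIntegral_congr_fun measurableSet_Ioi fun t ht => ?_
  rw [Measure.restrict_apply' measurableSet_Ici]
  exact congrArg ρ (inter_eq_left.mpr (Ioi_subset_Ici ht.le))

lemma setLIntegral_Iic_ofReal_abs_eq (ρ : Measure ℝ) :
    ∫⁻ x in Iic 0, ENNReal.ofReal |x| ∂ρ = ∫⁻ t in Iio 0, ρ (Iic t) := by
  have hnn : 0 ≤ᵐ[ρ.restrict (Iic 0)] fun x : ℝ => -x :=
    ae_restrict_of_forall_mem measurableSet_Iic fun _ hx => neg_nonneg.mpr hx
  have hneg : Neg.neg ⁻¹' Iio (0 : ℝ) = Ioi 0 := by ext; simp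
  rw [setLIntegral_congr_fun measurableSet_Iic fun x hx => by rw [abs_of_nonpos hx],
    lintegral_eq_lintegral_meas_le _ hnn measurable_neg.aemeasurable,
    ← (Measure.measurePreserving_neg volume).setLIntegral_comp_preimage_emb
      (Homeomorph.neg ℝ).measurableEmbedding (fun t => ρ (Iic t)), hneg]
  refine setLIntegral_congr_fun measurableSet_Ioi fun t ht => ?_
  rw [Measure.restrict_apply' measurableSet_Iic]
  congr 1
  ext x
  simp only [mem_inter_iff, mem_ofPred_eq, mem_Iic, le_neg]
  exact ⟨fun h => h.1, fun h => ⟨h, h.trans (neg_nonpos.mpr ht.le)⟩⟩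

lemma measurable_measure_Iic (ρ : Measure ℝ) : Measurable fun x => ρ (Iic x) :=
  Monotone.measurable fun _ _ h => measure_mono (Iic_subset_Iic.mpr h)

lemma measurable_measure_Ioi (ρ : Measure ℝ) : Measurable fun x => ρ (Ioi x) :=
  Antitone.measurable fun _ _ h => measure_mono (Ioi_subset_Ioi h)

lemma MeasureTheory.Measure.conv_apply_Iic (ρ η : Measure ℝ) [SFinite ρ] [SFinite η] (x : ℝ) :
    ρ.conv η (Iic x) = ∫⁻ y, ρ (Iic (x - y)) ∂η := by
  rw [Measure.conv, Measure.map_apply measurable_add measurableSet_Iic,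
    Measure.prod_apply_symm (measurable_add measurableSet_Iic)]
  congr with y
  congr with z
  simp [le_sub_iff_add_le]

lemma lintegral_lintegral_comp_sub (η : Measure ℝ) [SFinite η] {g : ℝ → ℝ≥0∞}
    (hg : Measurable g) : ∫⁻ x, ∫⁻ y, g (x - y) ∂η = η univ * ∫⁻ u, g u := by
  calc ∫⁻ x, ∫⁻ y, g (x - y) ∂η
      = ∫⁻ y, ∫⁻ x, g (x - y) ∂volume ∂η :=
        lintegral_lintegral_swap (f := fun x y => g (x - y)) (hg.comp measurable_sub).aemeasurable
    _ = ∫⁻ _, (∫⁻ u, g u) ∂η := lintegral_congr fun y => lintegral_sub_right_eq_self g y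
    _ = η univ * ∫⁻ u, g u := by rw [lintegral_const, mul_comm]

/-- `(F_μ - F_ν)⁺`, through truncated subtraction in `ℝ≥0∞`. -/
def cdfExcess (μ ν : Measure ℝ) (x : ℝ) : ℝ≥0∞ := μ (Iic x) - ν (Iic x)

lemma measurable_cdfExcess (μ ν : Measure ℝ) : Measurable (cdfExcess μ ν) :=
  (measurable_measure_Iic μ).sub (measurable_measure_Iic ν)

lemma cdfExcess_eq_measure_Ioi_sub (μ ν : Measure ℝ) [IsProbabilityMeasure μ]
    [IsProbabilityMeasure ν] (x : ℝ) : cdfExcess μ ν x = ν (Ioi x) - μ (Ioi x) := by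
  rw [cdfExcess, ← compl_Iic, prob_compl_eq_one_sub measurableSet_Iic,
    prob_compl_eq_one_sub measurableSet_Iic,
    ENNReal.sub_sub_sub_cancel_left ENNReal.one_ne_top prob_le_one]

section

variable {μ ν η : Measure ℝ}

lemma lintegral_cdfExcess_lt_top [IsProbabilityMeasure μ] [IsProbabilityMeasure ν]
    (hμ : ∫⁻ x in Iic 0, ENNReal.ofReal |x| ∂μ < ∞)
    (hν : ∫⁻ x in Ici 0, ENNReal.ofReal x ∂ν < ∞) : ∫⁻ x, cdfExcess μ ν x < ∞ := by
  rw [setLIntegral_Iic_ofReal_abs_eq] at hμ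
  rw [setLIntegral_Ici_ofReal_eq] at hν
  rw [← lintegral_add_compl _ measurableSet_Iio, compl_Iio, ← restrict_Ioi_eq_restrict_Ici]
  refine ENNReal.add_lt_top.mpr ⟨(lintegral_mono fun x => tsub_le_self).trans_lt hμ, ?_⟩
  refine (lintegral_mono fun x => ?_).trans_lt hν
  rw [cdfExcess_eq_measure_Ioi_sub]
  exact tsub_le_self

lemma lintegral_cdfExcess_eq_top [IsProbabilityMeasure μ] [IsProbabilityMeasure ν]
    (hμ : ∫⁻ x in Ici 0, ENNReal.ofReal x ∂μ = ∞)
    (hν : ∫⁻ x in Ici 0, ENNReal.ofReal x ∂ν < ∞) : ∫⁻ x, cdfExcess ν μ x = ∞ := by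
  rw [setLIntegral_Ici_ofReal_eq] at hμ hν
  refine eq_top_iff.mpr ?_
  calc ∞ = (∫⁻ t in Ioi 0, μ (Ioi t)) - ∫⁻ t in Ioi 0, ν (Ioi t) :=
        (ENNReal.sub_eq_top_iff.mpr ⟨hμ, hν.ne⟩).symm
    _ ≤ ∫⁻ t in Ioi 0, (μ (Ioi t) - ν (Ioi t)) :=
        lintegral_sub_le _ _ (measurable_measure_Ioi ν)
    _ = ∫⁻ t in Ioi 0, cdfExcess ν μ t := by simp only [cdfExcess_eq_measure_Ioi_sub]
    _ ≤ ∫⁻ t, cdfExcess ν μ t := setLIntegral_le_lintegral _ _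

lemma lintegral_cdfExcess_comp_sub_le [IsFiniteMeasure μ] [SFinite ν] [IsFiniteMeasure η]
    (hdom : StochDom (μ.conv η) (ν.conv η)) (x : ℝ) :
    ∫⁻ y, cdfExcess ν μ (x - y) ∂η ≤ ∫⁻ y, cdfExcess μ ν (x - y) ∂η := by
  have hmax : ∀ y, μ (Iic (x - y)) + cdfExcess ν μ (x - y)
      = ν (Iic (x - y)) + cdfExcess μ ν (x - y) := by
    intro y
    simp only [cdfExcess, add_tsub_eq_max, max_comm]
  have hsub : Measurable fun y : ℝ => x - y := measurable_const.sub measurable_id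
  have hμ : Measurable fun y => μ (Iic (x - y)) := (measurable_measure_Iic μ).comp hsub
  have hν : Measurable fun y => ν (Iic (x - y)) := (measurable_measure_Iic ν).comp hsub
  have hsum : μ.conv η (Iic x) + ∫⁻ y, cdfExcess ν μ (x - y) ∂η
      = ν.conv η (Iic x) + ∫⁻ y, cdfExcess μ ν (x - y) ∂η := by
    rw [Measure.conv_apply_Iic, Measure.conv_apply_Iic,
      ← lintegral_add_left hμ, ← lintegral_add_left hν]
    exact lintegral_congr hmax
  refine (ENNReal.add_le_add_iff_left (measure_ne_top (μ.conv η) (Iic x))).mp ?_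
  rw [hsum]
  exact add_le_add_left (hdom x) _

lemma lintegral_cdfExcess_le_of_stochDom [IsFiniteMeasure μ] [SFinite ν]
    [IsProbabilityMeasure η] (hdom : StochDom (μ.conv η) (ν.conv η)) :
    ∫⁻ x, cdfExcess ν μ x ≤ ∫⁻ x, cdfExcess μ ν x := by
  have h := lintegral_mono (μ := volume) (lintegral_cdfExcess_comp_sub_le hdom)
  rwa [lintegral_lintegral_comp_sub η (measurable_cdfExcess ν μ),
    lintegral_lintegral_comp_sub η (measurable_cdfExcess μ ν), measure_univ, one_mul,
    one_mul] at h

end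

theorem no_eta_of_plus_minus_infinity_general
    (μ ν : Measure ℝ) [IsProbabilityMeasure μ] [IsProbabilityMeasure ν]
    (hμneg : (∫⁻ x in Set.Iic (0 : ℝ), ENNReal.ofReal |x| ∂μ) < ⊤)
    (hμpos : (∫⁻ x in Set.Ici (0 : ℝ), ENNReal.ofReal x ∂μ) = ⊤)
    (hνpos : (∫⁻ x in Set.Ici (0 : ℝ), ENNReal.ofReal x ∂ν) < ⊤) :
    ¬ ∃ η : Measure ℝ, IsProbabilityMeasure η ∧ StochDom (μ.conv η) (ν.conv η) := by
  rintro ⟨η, hη, hdom⟩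
  have hle := lintegral_cdfExcess_le_of_stochDom hdom
  rw [lintegral_cdfExcess_eq_top hμpos hνpos, top_le_iff] at hle
  exact (lintegral_cdfExcess_lt_top hμneg hνpos).ne hle

theorem no_eta_of_plus_minus_infinity
    (μ ν : Measure ℝ) [IsProbabilityMeasure μ] [IsProbabilityMeasure ν]
    (hμneg : (∫⁻ x in Set.Iic (0 : ℝ), ENNReal.ofReal |x| ∂μ) < ⊤)
    (hμpos : (∫⁻ x in Set.Ici (0 : ℝ), ENNReal.ofReal x ∂μ) = ⊤)
    (hνpos : (∫⁻ x in Set.Ici (0 : ℝ), ENNReal.ofReal x ∂ν) < ⊤)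
    (hνneg : (∫⁻ x in Set.Iic (0 : ℝ), ENNReal.ofReal |x| ∂ν) = ⊤) :
    ¬ ∃ η : Measure ℝ, IsProbabilityMeasure η ∧ StochDom (μ.conv η) (ν.conv η) :=
  no_eta_of_plus_minus_infinity_general μ ν hμneg hμpos hνpos
end

section
/- Let ν ∈ P(ℝ) be non-atomic (ν({x}) = 0 for every x ∈ ℝ) and let μ ∈ P(ℝ). Then μ ≤ ν in first-order stochastic dominance if and only if there exists a Borel measurable function π : ℝ → ℝ with π(x) ≤ x for all x ∈ ℝ such that π_*ν = μ. -/
open MeasureTheory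

/-!
With `F = cdf ν` and `G = cdf μ`, take `π = G⁻¹ ∘ F`, where `G⁻¹(u) = inf {y | u ≤ G y}` is the
quantile function of `μ`. Right-continuity of `G` gives the Galois connection
`G⁻¹(u) ≤ t ↔ u ≤ G t`, so `π x ≤ x` is exactly `F x ≤ G x`, and `π⁻¹(-∞, t] = {F ≤ G t}`
up to a null set. Since `ν` has no atoms, `F` is continuous and `F_* ν` is uniform on `[0, 1]`,
whence `ν {F ≤ G t} = G t`. Conversely, `π ≤ id` gives `(-∞, x] ⊆ π⁻¹(-∞, x]`.
-/

open Set Filter ProbabilityTheory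

lemma stochDom_iff_cdf_le {μ ν : Measure ℝ} [IsProbabilityMeasure μ] [IsProbabilityMeasure ν] :
    StochDom μ ν ↔ ∀ x, cdf ν x ≤ cdf μ x :=
  forall_congr' fun x => by
    rw [← ofReal_cdf, ← ofReal_cdf, ENNReal.ofReal_le_ofReal_iff (cdf_nonneg _ _)]

lemma stochDom_map_of_le {ν : Measure ℝ} {π : ℝ → ℝ} (hπ : Measurable π) (hle : ∀ x, π x ≤ x) :
    StochDom (ν.map π) ν := fun t => by
  rw [Measure.map_apply hπ measurableSet_Iic]
  exact measure_mono fun x hx => (hle x).trans hx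

lemma continuous_cdf (ν : Measure ℝ) [IsProbabilityMeasure ν] [NullSingletonClass ν] :
    Continuous (cdf ν) := by
  refine continuous_iff_continuousAt.2 fun a => ?_
  have hsing : ENNReal.ofReal (cdf ν a - Function.leftLim (cdf ν) a) = 0 := by
    rw [← StieltjesFunction.measure_singleton, measure_cdf, measure_singleton]
  have hleft : Function.leftLim (cdf ν) a = cdf ν a :=
    le_antisymm ((monotone_cdf ν).leftLim_le le_rfl)
      (sub_nonpos.1 (ENNReal.ofReal_eq_zero.1 hsing))
  rw [(monotone_cdf ν).continuousAt_iff_leftLim_eq_rightLim, StieltjesFunction.rightLim_eq, hleft]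

lemma measure_cdf_le (ν : Measure ℝ) [IsProbabilityMeasure ν] [NullSingletonClass ν] {c : ℝ}
    (hc : c ≤ 1) : ν {x | cdf ν x ≤ c} = ENNReal.ofReal c := by
  set B := {x | cdf ν x ≤ c}
  have hB_lower : IsLowerSet B := fun x y hyx hx => (monotone_cdf ν hyx).trans hx
  rcases B.eq_empty_or_nonempty with hempty | hne
  · have hc0 : c ≤ 0 := ge_of_tendsto' (tendsto_cdf_atBot ν) fun x =>
      (not_le.1 (eq_empty_iff_forall_notMem.1 hempty x)).le
    rw [hempty, measure_empty, ENNReal.ofReal_of_nonpos hc0]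
  by_cases hbdd : BddAbove B
  · set a := sSup B
    have ha : a ∈ B := (isClosed_le (continuous_cdf ν) continuous_const).csSup_mem hne hbdd
    have hBa : B = Iic a :=
      subset_antisymm (fun x hx => le_csSup hbdd hx) (fun x hx => hB_lower hx ha)
    have hca : c ≤ cdf ν a :=
      ge_of_tendsto (((cdf ν).right_continuous a).mono Ioi_subset_Ici_self)
        (eventually_nhdsWithin_of_forall fun y hy =>
          (not_le.1 fun h => (not_le.2 hy) (le_csSup hbdd h)).le)
    rw [hBa, ← ofReal_cdf, le_antisymm ha hca]
  · have hBuniv : B = univ := by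
      refine eq_univ_of_forall fun x => ?_
      obtain ⟨y, hy, hxy⟩ := not_bddAbove_iff.1 hbdd x
      exact hB_lower hxy.le hy
    have hc1 : 1 ≤ c := le_of_tendsto' (tendsto_cdf_atTop ν) (eq_univ_iff_forall.1 hBuniv)
    rw [hBuniv, measure_univ, le_antisymm hc hc1, ENNReal.ofReal_one]

noncomputable def quantile (μ : Measure ℝ) (u : ℝ) : ℝ := sInf {y | u ≤ cdf μ y}

lemma quantile_le_iff (μ : Measure ℝ) [IsProbabilityMeasure μ] {u : ℝ} (hu : 0 < u)
    (hne : ∃ y, u ≤ cdf μ y) (t : ℝ) : quantile μ u ≤ t ↔ u ≤ cdf μ t := by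
  have hbdd : BddBelow {y | u ≤ cdf μ y} := by
    obtain ⟨y₀, hy₀⟩ := eventually_atBot.1 ((tendsto_cdf_atBot μ).eventually_lt_const hu)
    exact ⟨y₀, fun y hy => le_of_not_gt fun hyy => (hy₀ y hyy.le).not_ge hy⟩
  refine ⟨fun ht => ge_of_tendsto (((cdf μ).right_continuous t).mono Ioi_subset_Ici_self)
    (eventually_nhdsWithin_of_forall fun y hy => ?_), fun ht => csInf_le hbdd ht⟩
  obtain ⟨s, hs, hsy⟩ := exists_lt_of_csInf_lt hne (ht.trans_lt hy)
  exact le_trans hs (monotone_cdf μ hsy.le)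

/-- On the `ν`-null set `{cdf ν = 0}` the quantile is a junk value, so we keep `x` there. -/
noncomputable def quantileTransport (μ ν : Measure ℝ) (x : ℝ) : ℝ :=
  if cdf ν x = 0 then x else quantile μ (cdf ν x)

section quantileTransport

variable {μ ν : Measure ℝ} [IsProbabilityMeasure μ]

lemma quantileTransport_le_iff (h : ∀ x, cdf ν x ≤ cdf μ x) {x : ℝ} (hx : cdf ν x ≠ 0)
    (t : ℝ) : quantileTransport μ ν x ≤ t ↔ cdf ν x ≤ cdf μ t := by
  rw [quantileTransport, if_neg hx]
  exact quantile_le_iff μ ((cdf_nonneg ν x).lt_of_ne' hx) ⟨x, h x⟩ t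

lemma quantileTransport_le (h : ∀ x, cdf ν x ≤ cdf μ x) (x : ℝ) :
    quantileTransport μ ν x ≤ x := by
  by_cases hx : cdf ν x = 0
  · rw [quantileTransport, if_pos hx]
  · exact (quantileTransport_le_iff h hx x).2 (h x)

lemma measurable_quantileTransport (h : ∀ x, cdf ν x ≤ cdf μ x) :
    Measurable (quantileTransport μ ν) := by
  have hZ : MeasurableSet {x | cdf ν x = 0} :=
    (monotone_cdf ν).measurable (measurableSet_singleton 0)
  refine measurable_of_Iic fun t => ?_
  have hpre : quantileTransport μ ν ⁻¹' Iic t =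
      {x | cdf ν x = 0}.ite (Iic t) {x | cdf ν x ≤ cdf μ t} := by
    ext x
    by_cases hx : cdf ν x = 0
    · simp [Set.ite, quantileTransport, hx]
    · simp [Set.ite, hx, quantileTransport_le_iff h hx]
  rw [hpre]
  exact hZ.ite measurableSet_Iic ((monotone_cdf ν).measurable measurableSet_Iic)

lemma map_quantileTransport [IsProbabilityMeasure ν] [NullSingletonClass ν]
    (h : ∀ x, cdf ν x ≤ cdf μ x) : ν.map (quantileTransport μ ν) = μ := by
  have hZ : ν {x | cdf ν x = 0} = 0 := by
    refine measure_mono_null (fun x hx => le_of_eq hx) (?_ : ν {x | cdf ν x ≤ 0} = 0)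
    rw [measure_cdf_le ν zero_le_one, ENNReal.ofReal_zero]
  refine Measure.ext_of_Iic _ _ fun t => ?_
  rw [Measure.map_apply (measurable_quantileTransport h) measurableSet_Iic, ← ofReal_cdf,
    ← measure_cdf_le ν (cdf_le_one μ t)]
  refine measure_congr ?_
  filter_upwards [measure_eq_zero_iff_ae_notMem.1 hZ] with x hx
  exact propext (quantileTransport_le_iff h hx t)

end quantileTransport

theorem stochDom_iff_pushforward
    (μ ν : Measure ℝ) [IsProbabilityMeasure μ] [IsProbabilityMeasure ν]
    (hν : ∀ x : ℝ, ν {x} = 0) :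
    StochDom μ ν ↔
      ∃ π : ℝ → ℝ, Measurable π ∧ (∀ x : ℝ, π x ≤ x) ∧ ν.map π = μ := by
  constructor
  · intro h
    have : NullSingletonClass ν := ⟨hν⟩
    have hcdf := stochDom_iff_cdf_le.1 h
    exact ⟨_, measurable_quantileTransport hcdf, quantileTransport_le hcdf,
      map_quantileTransport hcdf⟩
  · rintro ⟨π, hπ, hle, rfl⟩
    exact stochDom_map_of_le hπ hle
end
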